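/- Let S, μ ∈ ℝ and Q > 0, and let φ₁, φ₂ : ℝ⁴ → ℝ be smooth. Define a : ℝ⁴ × ℝ → ℝ by a(x, u) = φ₁(x)·cos(Q u) + φ₂(x)·sin(Q u). Assume that for all (x, u) ∈ ℝ⁴ × ℝ: ∂²a/∂t² − Σ_{k=1}^{3} ∂²a/∂(xᵏ)² + ∂²a/∂u² + (S + μ)·a = 0. Then the complex function a_c := φ₁ + i·φ₂ : ℝ⁴ → ℂ satisfies the Klein–Gordon equation ∂²a_c/∂t² − Σ_{k=1}^{3} ∂²a_c/∂(xᵏ)² + M²·a_c = 0, where the real number M² is defined as S + μ − Q². -/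

import Mathlib

/-! The ansatz is a single Fourier mode in `u`, so `∂²/∂u²` acts on it as multiplication by `-Q²`
while the derivatives in `x` act on its coefficients. The field equation therefore says that the
mode with coefficients `□φᵢ + M² φᵢ` vanishes identically; evaluating at `Qu = 0` and `Qu = π/2`
shows that both coefficients vanish, and these are the real and imaginary parts of the
Klein–Gordon equation for `φ₁ + i φ₂`. -/

/-- Partial derivative of `f` in the direction `v` (as a function). -/
noncomputable def pder {E F : Type*} [NormedAddCommGroup E] [NormedSpace ℝ E]
    [NormedAddCommGroup F] [NormedSpace ℝ F] (v : E) (f : E → F) : E → F :=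
  fun x => fderiv ℝ f x v

/-- Coordinate direction `∂/∂xʲ` in `ℝ⁴ × ℝ`. -/
noncomputable def dxu (j : Fin 4) : (Fin 4 → ℝ) × ℝ := (Pi.single j 1, 0)

/-- Direction `∂/∂u` in `ℝ⁴ × ℝ`. -/
noncomputable def du : (Fin 4 → ℝ) × ℝ := (0, 1)

/-- Coordinate direction `∂/∂xʲ` in `ℝ⁴`. -/
noncomputable def dx (j : Fin 4) : Fin 4 → ℝ := Pi.single j 1

open Real ContinuousLinearMap

section Derivatives

variable {E F : Type*} [NormedAddCommGroup E] [NormedSpace ℝ E]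
  [NormedAddCommGroup F] [NormedSpace ℝ F]

theorem contDiff_pder {n : WithTop ℕ∞} {f : E → F} (hf : ContDiff ℝ (n + 1) f) (v : E) :
    ContDiff ℝ n (pder v f) :=
  (hf.fderiv_right le_rfl).clm_apply contDiff_const

theorem differentiable_pder {f : E → F} (hf : ContDiff ℝ 2 f) (v : E) :
    Differentiable ℝ (pder v f) :=
  (contDiff_pder (n := 1) hf v).differentiable one_ne_zero

noncomputable def dAlembertian (e : Fin 4 → E) (f : E → F) : E → F :=
  fun x => pder (e 0) (pder (e 0) f) x - ∑ k : Fin 3, pder (e k.succ) (pder (e k.succ) f) x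

noncomputable def fourierMode (Q : ℝ) (f g : E → ℝ) : E × ℝ → ℝ :=
  fun p => f p.1 * cos (Q * p.2) + g p.1 * sin (Q * p.2)

noncomputable def complexOf (f g : E → ℝ) : E → ℂ :=
  fun y => (f y : ℂ) + Complex.I * (g y : ℂ)

theorem hasFDerivAt_fourierMode (Q : ℝ) {f g : E → ℝ} {f' g' : E →L[ℝ] ℝ} (q : E × ℝ)
    (hf : HasFDerivAt f f' q.1) (hg : HasFDerivAt g g' q.1) :
    HasFDerivAt (fourierMode Q f g)
      ((f q.1 • ((-sin (Q * q.2) * Q) • snd ℝ E ℝ) + cos (Q * q.2) • f'.comp (fst ℝ E ℝ))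
        + (g q.1 • ((cos (Q * q.2) * Q) • snd ℝ E ℝ) + sin (Q * q.2) • g'.comp (fst ℝ E ℝ)))
      q := by
  have hQu : HasDerivAt (fun u : ℝ => Q * u) Q q.2 := by
    simpa using (hasDerivAt_id q.2).const_mul Q
  have hcos := ((hasDerivAt_cos (Q * q.2)).comp q.2 hQu).comp_hasFDerivAt q
    (hasFDerivAt_snd (𝕜 := ℝ))
  have hsin := ((hasDerivAt_sin (Q * q.2)).comp q.2 hQu).comp_hasFDerivAt q
    (hasFDerivAt_snd (𝕜 := ℝ))
  exact ((hf.comp q hasFDerivAt_fst).mul hcos).add ((hg.comp q hasFDerivAt_fst).mul hsin)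

theorem pder_fourierMode_inl (Q : ℝ) {f g : E → ℝ} (hf : Differentiable ℝ f)
    (hg : Differentiable ℝ g) (v : E) :
    pder (v, 0) (fourierMode Q f g) = fourierMode Q (pder v f) (pder v g) := by
  funext q
  simp [pder, (hasFDerivAt_fourierMode Q q (hf q.1).hasFDerivAt (hg q.1).hasFDerivAt).fderiv,
    fourierMode, mul_comm]

theorem pder_fourierMode_inr (Q : ℝ) {f g : E → ℝ} (hf : Differentiable ℝ f)
    (hg : Differentiable ℝ g) :
    pder (0, 1) (fourierMode Q f g) = fourierMode Q (Q • g) (-(Q • f)) := by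
  funext q
  simp only [pder, (hasFDerivAt_fourierMode Q q (hf q.1).hasFDerivAt (hg q.1).hasFDerivAt).fderiv]
  simp only [add_apply, smul_apply, coe_snd', coe_fst', comp_apply, map_zero, smul_eq_mul,
    fourierMode, Pi.smul_apply, Pi.neg_apply]
  ring

theorem pder_pder_fourierMode_inr (Q : ℝ) {f g : E → ℝ} (hf : Differentiable ℝ f)
    (hg : Differentiable ℝ g) :
    pder (0, 1) (pder (0, 1) (fourierMode Q f g)) = -Q ^ 2 • fourierMode Q f g := by
  rw [pder_fourierMode_inr Q hf hg, pder_fourierMode_inr Q (hg.const_smul Q) (hf.const_smul Q).neg]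
  funext q
  simp only [fourierMode, Pi.smul_apply, Pi.neg_apply, smul_eq_mul]
  ring

theorem dAlembertian_fourierMode (Q : ℝ) {f g : E → ℝ} (hf : ContDiff ℝ 2 f)
    (hg : ContDiff ℝ 2 g) (e : Fin 4 → E) :
    dAlembertian (fun j => (e j, 0)) (fourierMode Q f g)
      = fourierMode Q (dAlembertian e f) (dAlembertian e g) := by
  have hmode2 (v : E) : pder (v, 0) (pder (v, 0) (fourierMode Q f g))
      = fourierMode Q (pder v (pder v f)) (pder v (pder v g)) := by
    rw [pder_fourierMode_inl Q (hf.differentiable two_ne_zero) (hg.differentiable two_ne_zero),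
      pder_fourierMode_inl Q (differentiable_pder hf v) (differentiable_pder hg v)]
  funext q
  simp only [dAlembertian, hmode2, fourierMode, Finset.sum_add_distrib, ← Finset.sum_mul]
  ring

theorem pder_complexOf {f g : E → ℝ} (hf : Differentiable ℝ f) (hg : Differentiable ℝ g)
    (v : E) : pder v (complexOf f g) = complexOf (pder v f) (pder v g) := by
  funext y
  have hf' := Complex.ofRealCLM.hasFDerivAt.comp y (hf y).hasFDerivAt
  have hg' := Complex.ofRealCLM.hasFDerivAt.comp y (hg y).hasFDerivAt
  have h : HasFDerivAt (complexOf f g) _ y := hf'.add (hg'.const_mul Complex.I)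
  simp [pder, complexOf, h.fderiv]

theorem dAlembertian_complexOf {f g : E → ℝ} (hf : ContDiff ℝ 2 f) (hg : ContDiff ℝ 2 g)
    (e : Fin 4 → E) :
    dAlembertian e (complexOf f g) = complexOf (dAlembertian e f) (dAlembertian e g) := by
  have hc2 (v : E) : pder v (pder v (complexOf f g))
      = complexOf (pder v (pder v f)) (pder v (pder v g)) := by
    rw [pder_complexOf (hf.differentiable two_ne_zero) (hg.differentiable two_ne_zero),
      pder_complexOf (differentiable_pder hf v) (differentiable_pder hg v)]
  funext y
  simp only [dAlembertian, hc2, complexOf, Finset.sum_add_distrib, ← Finset.mul_sum]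
  push_cast
  ring

end Derivatives

theorem eq_zero_of_fourierMode_eq_zero {E : Type*} {Q : ℝ} (hQ : Q ≠ 0) {f g : E → ℝ}
    (h : fourierMode Q f g = 0) : f = 0 ∧ g = 0 := by
  have hQpi : Q * (π / (2 * Q)) = π / 2 := by field_simp
  constructor <;> funext x
  · simpa [fourierMode] using congrFun h (x, 0)
  · simpa [fourierMode, hQpi] using congrFun h (x, π / (2 * Q))

theorem stmt7 (S μ Q : ℝ) (hQ : 0 < Q)
    (φ₁ φ₂ : (Fin 4 → ℝ) → ℝ)
    (hφ₁ : ContDiff ℝ (⊤ : ℕ∞) φ₁) (hφ₂ : ContDiff ℝ (⊤ : ℕ∞) φ₂)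
    (a : (Fin 4 → ℝ) × ℝ → ℝ)
    (ha : ∀ (x : Fin 4 → ℝ) (u : ℝ),
      a (x, u) = φ₁ x * Real.cos (Q * u) + φ₂ x * Real.sin (Q * u))
    (heq : ∀ q : (Fin 4 → ℝ) × ℝ,
      pder (dxu 0) (pder (dxu 0) a) q
        - (∑ k : Fin 3, pder (dxu k.succ) (pder (dxu k.succ) a) q)
        + pder du (pder du a) q + (S + μ) * a q = 0) :
    ∀ x : Fin 4 → ℝ,
      pder (dx 0) (pder (dx 0) (fun y => (φ₁ y : ℂ) + Complex.I * (φ₂ y : ℂ))) x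
        - (∑ k : Fin 3, pder (dx k.succ)
            (pder (dx k.succ) (fun y => (φ₁ y : ℂ) + Complex.I * (φ₂ y : ℂ))) x)
        + ((S + μ - Q ^ 2 : ℝ) : ℂ) * ((φ₁ x : ℂ) + Complex.I * (φ₂ x : ℂ)) = 0 := by
  intro x
  obtain rfl : a = fourierMode Q φ₁ φ₂ := funext fun ⟨x, u⟩ => ha x u
  set c := S + μ - Q ^ 2
  have h2φ₁ : ContDiff ℝ 2 φ₁ := hφ₁.of_le (WithTop.coe_le_coe.mpr le_top)
  have h2φ₂ : ContDiff ℝ 2 φ₂ := hφ₂.of_le (WithTop.coe_le_coe.mpr le_top)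
  have hmode : fourierMode Q (dAlembertian dx φ₁ + c • φ₁) (dAlembertian dx φ₂ + c • φ₂) = 0 := by
    funext q
    have hq : dAlembertian (fun j => (dx j, 0)) (fourierMode Q φ₁ φ₂) q
        + pder (0, 1) (pder (0, 1) (fourierMode Q φ₁ φ₂)) q
        + (S + μ) * fourierMode Q φ₁ φ₂ q = 0 := heq q
    rw [dAlembertian_fourierMode Q h2φ₁ h2φ₂, pder_pder_fourierMode_inr Q
      (h2φ₁.differentiable two_ne_zero) (h2φ₂.differentiable two_ne_zero)] at hq
    simp only [fourierMode, Pi.add_apply, Pi.smul_apply, smul_eq_mul, Pi.zero_apply] at hq ⊢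
    linear_combination hq
  obtain ⟨h₁, h₂⟩ := eq_zero_of_fourierMode_eq_zero hQ.ne' hmode
  change dAlembertian dx (complexOf φ₁ φ₂) x + (c : ℂ) * complexOf φ₁ φ₂ x = 0
  have h₁x := congrArg (fun r : ℝ => (r : ℂ)) (congrFun h₁ x)
  have h₂x := congrArg (fun r : ℝ => (r : ℂ)) (congrFun h₂ x)
  simp only [Pi.add_apply, Pi.smul_apply, smul_eq_mul, Pi.zero_apply] at h₁x h₂x
  push_cast at h₁x h₂x
  rw [dAlembertian_complexOf h2φ₁ h2φ₂]
  simp only [complexOf]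
  linear_combination h₁x + Complex.I * h₂x
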